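/- With μ(V) and λ(V) as defined (the relaxed penalized min-max value and the no-signaling equilibrium value), if (B, Π0, Π1) is a δ-optimal maximizer for μ(V), i.e., ⟨f_V(A,A0,A1), (B,Π0,Π1)⟩ ≥ μ(V) − δ for all feasible triples (A,A0,A1), then B is a δ-optimal maximizer for λ(V), i.e., ⟨V, A ⊗ B⟩ ≥ λ(V) − δ for all no-signaling stochastic matrices A. -/

import Mathlib

set_option maxHeartbeats 2000000


open Finset

/-- A matrix with rows indexed by answers `K` and columns by questions `Q` is stochastic
if it is entrywise nonnegative and each column sums to 1. -/
def Stochastic {K Q : Type*} [Fintype K] (M : K → Q → ℝ) : Prop :=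
  (∀ k q, 0 ≤ M k q) ∧ ∀ q, ∑ k, M k q = 1

/-- A stochastic matrix on question pairs/answer pairs is no-signaling if each of its
single-prover marginals depends only on that prover's question, as witnessed by a pair
of stochastic matrices. -/
def NoSig {S0 S1 K0 K1 : Type*} [Fintype K0] [Fintype K1]
    (A : K0 × K1 → S0 × S1 → ℝ) : Prop :=
  (∃ A0 : K0 → S0 → ℝ, Stochastic A0 ∧
    ∀ k0 i0 i1, ∑ k1, A (k0, k1) (i0, i1) = A0 k0 i0) ∧
  (∃ A1 : K1 → S1 → ℝ, Stochastic A1 ∧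
    ∀ k1 i0 i1, ∑ k0, A (k0, k1) (i0, i1) = A1 k1 i1)

/-- `⟨V, A ⊗ B⟩`: the probability that the verifier with question distribution `π`
and payout vectors `v` rejects, given strategies `A` for Team Alice and `B` for
Team Bob. -/
def payoff {I J K L : Type*} [Fintype I] [Fintype J] [Fintype K] [Fintype L]
    (π : I × J → ℝ) (v : I × J → K × L → ℝ)
    (A : K → I → ℝ) (B : L → J → ℝ) : ℝ :=
  ∑ i, ∑ j, ∑ k, ∑ l, π (i, j) * v (i, j) (k, l) * (A k i * B l j)

variable {S0 S1 K0 K1 T0 T1 L0 L1 : Type*}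
  [Fintype S0] [Fintype S1] [Fintype K0] [Fintype K1]
  [Fintype T0] [Fintype T1] [Fintype L0] [Fintype L1]

/-- The no-signaling equilibrium value `λ(V) = min_A max_B ⟨V, A ⊗ B⟩`, the minimum
over no-signaling stochastic `A` of the maximum over no-signaling stochastic `B`. -/
noncomputable def lamVal
    (π : (S0 × S1) × (T0 × T1) → ℝ)
    (v : (S0 × S1) × (T0 × T1) → (K0 × K1) × (L0 × L1) → ℝ) : ℝ :=
  ⨅ A : {A : K0 × K1 → S0 × S1 → ℝ // Stochastic A ∧ NoSig A},
    ⨆ B : {B : L0 × L1 → T0 × T1 → ℝ // Stochastic B ∧ NoSig B},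
      payoff π v A.1 B.1

/-- The relaxed penalized min-max value `μ(V)`: Alice plays an arbitrary stochastic
triple `(A, A0, A1)`, Bob plays a no-signaling stochastic `B` together with penalty
matrices `0 ≤ Q_c ≤ e p_Alice^T`, and the objective is
`⟨V, A⊗B⟩ + Σ_c ⟨mar(A) − A_c ⊗ e^T, Q_c⟩`. -/
noncomputable def muVal
    (π : (S0 × S1) × (T0 × T1) → ℝ)
    (v : (S0 × S1) × (T0 × T1) → (K0 × K1) × (L0 × L1) → ℝ) : ℝ :=
  ⨅ X : {X : (K0 × K1 → S0 × S1 → ℝ) × (K0 → S0 → ℝ) × (K1 → S1 → ℝ) //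
          Stochastic X.1 ∧ Stochastic X.2.1 ∧ Stochastic X.2.2},
    ⨆ Y : {Y : (L0 × L1 → T0 × T1 → ℝ) × (K0 → S0 × S1 → ℝ) × (K1 → S0 × S1 → ℝ) //
          (Stochastic Y.1 ∧ NoSig Y.1) ∧
          (∀ k0 i, 0 ≤ Y.2.1 k0 i ∧ Y.2.1 k0 i ≤ ∑ j, π (i, j)) ∧
          (∀ k1 i, 0 ≤ Y.2.2 k1 i ∧ Y.2.2 k1 i ≤ ∑ j, π (i, j))},
      payoff π v X.1.1 Y.1.1 +
        (∑ k0, ∑ i, ((∑ k1, X.1.1 (k0, k1) i) - X.1.2.1 k0 i.1) * Y.1.2.1 k0 i) +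
        (∑ k1, ∑ i, ((∑ k0, X.1.1 (k0, k1) i) - X.1.2.2 k1 i.2) * Y.1.2.2 k1 i)


lemma max_sub_max (x y : ℝ) : max (x - y) 0 - max (y - x) 0 = x - y := by
  simp only [max_def]; split_ifs <;> linarith

lemma adjust_fst {K0 K1 : Type*} [Fintype K0] [Fintype K1]
    (a : K0 × K1 → ℝ) (α : K0 → ℝ)
    (ha : ∀ k, 0 ≤ a k) (hα : ∀ k0, 0 ≤ α k0)
    (hsum : ∑ k0, α k0 = ∑ k, a k) :
    ∃ b : K0 × K1 → ℝ, (∀ k, 0 ≤ b k) ∧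
      (∀ k0, ∑ k1, b (k0, k1) = α k0) ∧
      (∀ k1, ∑ k0, b (k0, k1) = ∑ k0, a (k0, k1)) ∧
      ∑ k, max (b k - a k) 0 ≤ ∑ k0, max ((∑ k1, a (k0, k1)) - α k0) 0 := by
  classical
  set m0 : K0 → ℝ := fun k0 => ∑ k1, a (k0, k1) with hm0
  have hm0nn : ∀ k0, 0 ≤ m0 k0 := fun k0 => Finset.sum_nonneg fun _ _ => ha _
  set r : K0 × K1 → ℝ := fun k =>
    if m0 k.1 = 0 then 0 else a k * max (m0 k.1 - α k.1) 0 / m0 k.1 with hr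
  have hrnn : ∀ k, 0 ≤ r k := by
    intro k; simp only [hr]; split
    · exact le_refl 0
    · exact div_nonneg (mul_nonneg (ha k) (le_max_right _ _)) (hm0nn _)
  have hrle : ∀ k, r k ≤ a k := by
    intro k; simp only [hr]; split
    · exact ha k
    · rename_i h
      have hpos : 0 < m0 k.1 := lt_of_le_of_ne (hm0nn _) (Ne.symm h)
      rw [div_le_iff₀ hpos]
      have h1 : max (m0 k.1 - α k.1) 0 ≤ m0 k.1 := max_le (by linarith [hα k.1]) (hm0nn _)
      exact mul_le_mul_of_nonneg_left h1 (ha k)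
  have hrsum : ∀ k0, ∑ k1, r (k0, k1) = max (m0 k0 - α k0) 0 := by
    intro k0
    by_cases h : m0 k0 = 0
    · have h0 : ∀ k1, r (k0, k1) = 0 := fun k1 => by simp [hr, h]
      rw [Finset.sum_congr rfl fun k1 _ => h0 k1, Finset.sum_const_zero]
      exact (max_eq_right (by linarith [hα k0, h.le])).symm
    · have hpos : 0 < m0 k0 := lt_of_le_of_ne (hm0nn _) (Ne.symm h)
      have h0 : ∀ k1, r (k0, k1) = a (k0, k1) * max (m0 k0 - α k0) 0 / m0 k0 :=
        fun k1 => by simp [hr, h]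
      rw [Finset.sum_congr rfl fun k1 _ => h0 k1, ← Finset.sum_div, ← Finset.sum_mul]
      rw [show (∑ k1, a (k0, k1)) = m0 k0 from rfl]
      field_simp
  set γ : K1 → ℝ := fun k1 => ∑ k0, r (k0, k1) with hγ
  have hγnn : ∀ k1, 0 ≤ γ k1 := fun k1 => Finset.sum_nonneg fun _ _ => hrnn _
  set δ0 : ℝ := ∑ k0, max (m0 k0 - α k0) 0 with hδ0
  have hγsum : ∑ k1, γ k1 = δ0 := by
    rw [hγ, hδ0, Finset.sum_comm]
    exact Finset.sum_congr rfl fun k0 _ => hrsum k0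
  have hδ0' : ∑ k0, max (α k0 - m0 k0) 0 = δ0 := by
    have h1 : ∑ k0, (max (α k0 - m0 k0) 0 - max (m0 k0 - α k0) 0) = ∑ k0, (α k0 - m0 k0) :=
      Finset.sum_congr rfl fun k0 _ => max_sub_max _ _
    rw [Finset.sum_sub_distrib, Finset.sum_sub_distrib] at h1
    have h2 : ∑ k0, m0 k0 = ∑ k, a k := by
      rw [hm0]; exact (Fintype.sum_prod_type _).symm
    rw [hδ0]; linarith
  by_cases hδz : δ0 = 0
  · refine ⟨a, ha, ?_, fun _ => rfl, ?_⟩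
    · intro k0
      have h1 : max (m0 k0 - α k0) 0 = 0 :=
        (Finset.sum_eq_zero_iff_of_nonneg fun k _ => le_max_right _ 0).mp (hδ0.symm.trans hδz) k0
          (Finset.mem_univ _)
      have h2 : max (α k0 - m0 k0) 0 = 0 :=
        (Finset.sum_eq_zero_iff_of_nonneg fun k _ => le_max_right _ 0).mp (hδ0'.trans hδz) k0
          (Finset.mem_univ _)
      have h3 := le_max_left (m0 k0 - α k0) 0
      have h4 := le_max_left (α k0 - m0 k0) 0
      rw [h1] at h3; rw [h2] at h4
      show m0 k0 = α k0
      linarith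
    · simp only [sub_self, max_self]
      rw [Finset.sum_const_zero]
      exact hδz.symm.le
  · have hδpos : 0 < δ0 := lt_of_le_of_ne (Finset.sum_nonneg fun k _ => le_max_right _ 0)
      (Ne.symm hδz)
    set s : K0 × K1 → ℝ := fun k => max (α k.1 - m0 k.1) 0 * γ k.2 / δ0 with hs
    have hsnn : ∀ k, 0 ≤ s k :=
      fun k => div_nonneg (mul_nonneg (le_max_right _ _) (hγnn _)) hδpos.le
    refine ⟨fun k => a k - r k + s k, ?_, ?_, ?_, ?_⟩
    · intro k
      show (0:ℝ) ≤ a k - r k + s k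
      have h1 := hrle k; have h2 := hsnn k; linarith
    · intro k0
      rw [Finset.sum_add_distrib, Finset.sum_sub_distrib]
      have h1 : ∑ k1, s (k0, k1) = max (α k0 - m0 k0) 0 := by
        simp only [hs]
        rw [← Finset.sum_div, ← Finset.mul_sum, hγsum]
        field_simp
      rw [h1, hrsum k0, show (∑ k1, a (k0, k1)) = m0 k0 from rfl]
      linarith [max_sub_max (α k0) (m0 k0), max_sub_max (m0 k0) (α k0)]
    · intro k1
      rw [Finset.sum_add_distrib, Finset.sum_sub_distrib]
      have h1 : ∑ k0, s (k0, k1) = γ k1 := by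
        simp only [hs]
        rw [← Finset.sum_div, ← Finset.sum_mul, hδ0']
        field_simp
      rw [h1, show (∑ k0, r (k0, k1)) = γ k1 from rfl]
      ring
    · have h1 : ∀ k : K0 × K1, max (a k - r k + s k - a k) 0 ≤ s k := by
        intro k
        have := hrnn k; have := hsnn k
        have : a k - r k + s k - a k ≤ s k := by linarith
        exact max_le this (hsnn k)
      calc ∑ k, max (a k - r k + s k - a k) 0 ≤ ∑ k, s k :=
            Finset.sum_le_sum fun k _ => h1 k
        _ = ∑ k0, ∑ k1, s (k0, k1) := Fintype.sum_prod_type _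
        _ = ∑ k0, max (α k0 - m0 k0) 0 := by
            refine Finset.sum_congr rfl fun k0 _ => ?_
            simp only [hs]
            rw [← Finset.sum_div, ← Finset.mul_sum, hγsum]
            field_simp
        _ = δ0 := hδ0'

lemma sum_prod_swap {K0 K1 : Type*} [Fintype K0] [Fintype K1] (f : K0 × K1 → ℝ) :
    ∑ k : K1 × K0, f (k.2, k.1) = ∑ k : K0 × K1, f k := by
  rw [Fintype.sum_prod_type, Fintype.sum_prod_type, Finset.sum_comm]

lemma adjust_snd {K0 K1 : Type*} [Fintype K0] [Fintype K1]
    (a : K0 × K1 → ℝ) (β : K1 → ℝ)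
    (ha : ∀ k, 0 ≤ a k) (hβ : ∀ k1, 0 ≤ β k1)
    (hsum : ∑ k1, β k1 = ∑ k, a k) :
    ∃ b : K0 × K1 → ℝ, (∀ k, 0 ≤ b k) ∧
      (∀ k1, ∑ k0, b (k0, k1) = β k1) ∧
      (∀ k0, ∑ k1, b (k0, k1) = ∑ k1, a (k0, k1)) ∧
      ∑ k, max (b k - a k) 0 ≤ ∑ k1, max ((∑ k0, a (k0, k1)) - β k1) 0 := by
  obtain ⟨b', h0, h1, h2, h3⟩ := adjust_fst (fun k : K1 × K0 => a (k.2, k.1)) β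
    (fun k => ha _) hβ (by rw [hsum, sum_prod_swap a])
  refine ⟨fun k => b' (k.2, k.1), fun k => h0 _, h1, h2, ?_⟩
  calc ∑ k : K0 × K1, max (b' (k.2, k.1) - a k) 0
      = ∑ k : K1 × K0, max (b' k - a (k.2, k.1)) 0 := by
        rw [← sum_prod_swap (fun k : K0 × K1 => max (b' (k.2, k.1) - a k) 0)]
    _ ≤ _ := h3

lemma couple {K0 K1 : Type*} [Fintype K0] [Fintype K1]
    (a : K0 × K1 → ℝ) (α : K0 → ℝ) (β : K1 → ℝ)
    (ha : ∀ k, 0 ≤ a k) (hα : ∀ k0, 0 ≤ α k0) (hβ : ∀ k1, 0 ≤ β k1)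
    (hαs : ∑ k0, α k0 = ∑ k, a k) (hβs : ∑ k1, β k1 = ∑ k, a k) :
    ∃ b : K0 × K1 → ℝ, (∀ k, 0 ≤ b k) ∧
      (∀ k0, ∑ k1, b (k0, k1) = α k0) ∧
      (∀ k1, ∑ k0, b (k0, k1) = β k1) ∧
      ∑ k, max (b k - a k) 0 ≤
        (∑ k0, max ((∑ k1, a (k0, k1)) - α k0) 0) +
        (∑ k1, max ((∑ k0, a (k0, k1)) - β k1) 0) := by
  obtain ⟨c, hc0, hc1, hc2, hc3⟩ := adjust_fst a α ha hα hαs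
  have hcs : ∑ k, c k = ∑ k, a k :=
    calc ∑ k, c k = ∑ k0, ∑ k1, c (k0, k1) := Fintype.sum_prod_type c
      _ = ∑ k0, α k0 := Finset.sum_congr rfl fun k0 _ => hc1 k0
      _ = ∑ k, a k := hαs
  obtain ⟨b, hb0, hb1, hb2, hb3⟩ := adjust_snd c β hc0 hβ (by rw [hcs, hβs])
  refine ⟨b, hb0, ?_, ?_, ?_⟩
  · intro k0; rw [hb2 k0]; exact hc1 k0
  · exact hb1
  · have htri : ∀ k, max (b k - a k) 0 ≤ max (b k - c k) 0 + max (c k - a k) 0 := by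
      intro k
      have h1 := le_max_left (b k - c k) 0
      have h2 := le_max_left (c k - a k) 0
      have h3 := le_max_right (b k - c k) 0
      have h4 := le_max_right (c k - a k) 0
      exact max_le (by linarith) (by linarith)
    calc ∑ k, max (b k - a k) 0
        ≤ ∑ k, (max (b k - c k) 0 + max (c k - a k) 0) :=
          Finset.sum_le_sum fun k _ => htri k
      _ = (∑ k, max (b k - c k) 0) + ∑ k, max (c k - a k) 0 := Finset.sum_add_distrib
      _ ≤ (∑ k1, max ((∑ k0, c (k0, k1)) - β k1) 0) +
            ∑ k0, max ((∑ k1, a (k0, k1)) - α k0) 0 := add_le_add hb3 hc3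
      _ = (∑ k0, max ((∑ k1, a (k0, k1)) - α k0) 0) +
            ∑ k1, max ((∑ k0, a (k0, k1)) - β k1) 0 := by
          rw [add_comm]
          congr 1
          exact Finset.sum_congr rfl fun k1 _ => by rw [hc2 k1]

lemma payoff_eq {I J K L : Type*} [Fintype I] [Fintype J] [Fintype K] [Fintype L]
    (π : I × J → ℝ) (v : I × J → K × L → ℝ) (A : K → I → ℝ) (B : L → J → ℝ) :
    payoff π v A B
      = ∑ i, ∑ k, A k i * ∑ j, ∑ l, π (i, j) * v (i, j) (k, l) * B l j := by
  unfold payoff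
  refine Finset.sum_congr rfl fun i _ => ?_
  rw [Finset.sum_comm]
  refine Finset.sum_congr rfl fun k _ => ?_
  rw [Finset.mul_sum]
  refine Finset.sum_congr rfl fun j _ => ?_
  rw [Finset.mul_sum]
  exact Finset.sum_congr rfl fun l _ => by ring

lemma weight_nonneg {I J K L : Type*} [Fintype I] [Fintype J] [Fintype K] [Fintype L]
    (π : I × J → ℝ) (v : I × J → K × L → ℝ) (B : L → J → ℝ)
    (hπ : ∀ q, 0 ≤ π q) (hv : ∀ q r, 0 ≤ v q r ∧ v q r ≤ 1) (hB : ∀ l j, 0 ≤ B l j)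
    (i : I) (k : K) :
    0 ≤ ∑ j, ∑ l, π (i, j) * v (i, j) (k, l) * B l j :=
  Finset.sum_nonneg fun j _ => Finset.sum_nonneg fun l _ =>
    mul_nonneg (mul_nonneg (hπ _) (hv _ _).1) (hB _ _)

lemma weight_le {I J K L : Type*} [Fintype I] [Fintype J] [Fintype K] [Fintype L]
    (π : I × J → ℝ) (v : I × J → K × L → ℝ) (B : L → J → ℝ)
    (hπ : ∀ q, 0 ≤ π q) (hv : ∀ q r, 0 ≤ v q r ∧ v q r ≤ 1) (hB : Stochastic B)
    (i : I) (k : K) :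
    ∑ j, ∑ l, π (i, j) * v (i, j) (k, l) * B l j ≤ ∑ j, π (i, j) := by
  refine Finset.sum_le_sum fun j _ => ?_
  calc ∑ l, π (i, j) * v (i, j) (k, l) * B l j
      ≤ ∑ l, π (i, j) * B l j := Finset.sum_le_sum fun l _ => by
        have h1 := (hv (i, j) (k, l)).2
        have h3 := hB.1 l j
        have h4 := hπ (i, j)
        calc π (i, j) * v (i, j) (k, l) * B l j ≤ π (i, j) * 1 * B l j :=
              mul_le_mul_of_nonneg_right (mul_le_mul_of_nonneg_left h1 h4) h3
          _ = π (i, j) * B l j := by ring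
    _ = π (i, j) * ∑ l, B l j := (Finset.mul_sum _ _ _).symm
    _ = π (i, j) := by rw [hB.2 j, mul_one]

lemma payoff_nonneg {I J K L : Type*} [Fintype I] [Fintype J] [Fintype K] [Fintype L]
    (π : I × J → ℝ) (v : I × J → K × L → ℝ) (A : K → I → ℝ) (B : L → J → ℝ)
    (hπ : ∀ q, 0 ≤ π q) (hv : ∀ q r, 0 ≤ v q r ∧ v q r ≤ 1)
    (hA : ∀ k i, 0 ≤ A k i) (hB : ∀ l j, 0 ≤ B l j) :
    0 ≤ payoff π v A B := by
  unfold payoff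
  refine Finset.sum_nonneg fun i _ => Finset.sum_nonneg fun j _ =>
    Finset.sum_nonneg fun k _ => Finset.sum_nonneg fun l _ => ?_
  exact mul_nonneg (mul_nonneg (hπ _) (hv _ _).1) (mul_nonneg (hA _ _) (hB _ _))

lemma payoff_le_one {I J K L : Type*} [Fintype I] [Fintype J] [Fintype K] [Fintype L]
    (π : I × J → ℝ) (v : I × J → K × L → ℝ) (A : K → I → ℝ) (B : L → J → ℝ)
    (hπ : ∀ q, 0 ≤ π q) (hπ1 : ∑ q, π q = 1) (hv : ∀ q r, 0 ≤ v q r ∧ v q r ≤ 1)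
    (hA : Stochastic A) (hB : Stochastic B) :
    payoff π v A B ≤ 1 := by
  rw [payoff_eq]
  calc ∑ i, ∑ k, A k i * ∑ j, ∑ l, π (i, j) * v (i, j) (k, l) * B l j
      ≤ ∑ i, ∑ k, A k i * ∑ j, π (i, j) := by
        refine Finset.sum_le_sum fun i _ => Finset.sum_le_sum fun k _ =>
          mul_le_mul_of_nonneg_left (weight_le π v B hπ hv hB i k) (hA.1 k i)
    _ = ∑ i, (∑ j, π (i, j)) := by
        refine Finset.sum_congr rfl fun i _ => ?_
        rw [← Finset.sum_mul, hA.2 i, one_mul]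
    _ = ∑ q, π q := (Fintype.sum_prod_type π).symm
    _ = 1 := hπ1

lemma exists_stoch_ns {T0 T1 L0 L1 : Type*}
    [Fintype T0] [Fintype T1] [Fintype L0] [Fintype L1] [Nonempty L0] [Nonempty L1] :
    ∃ B : L0 × L1 → T0 × T1 → ℝ, Stochastic B ∧ NoSig B := by
  have h0 : (0:ℝ) < (Fintype.card L0 : ℝ) := by
    exact_mod_cast Fintype.card_pos
  have h1 : (0:ℝ) < (Fintype.card L1 : ℝ) := by
    exact_mod_cast Fintype.card_pos
  refine ⟨fun _ _ => ((Fintype.card L0 : ℝ) * (Fintype.card L1 : ℝ))⁻¹,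
    ⟨fun _ _ => by positivity, fun q => ?_⟩, ?_, ?_⟩
  · rw [Finset.sum_const, Finset.card_univ, Fintype.card_prod, nsmul_eq_mul]
    push_cast
    field_simp
  · refine ⟨fun _ _ => (Fintype.card L0 : ℝ)⁻¹, ⟨fun _ _ => by positivity, fun q => ?_⟩,
      fun l0 t0 t1 => ?_⟩
    · rw [Finset.sum_const, Finset.card_univ, nsmul_eq_mul]; field_simp
    · rw [Finset.sum_const, Finset.card_univ, nsmul_eq_mul]; field_simp
  · refine ⟨fun _ _ => (Fintype.card L1 : ℝ)⁻¹, ⟨fun _ _ => by positivity, fun q => ?_⟩,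
      fun l1 t0 t1 => ?_⟩
    · rw [Finset.sum_const, Finset.card_univ, nsmul_eq_mul]; field_simp
    · rw [Finset.sum_const, Finset.card_univ, nsmul_eq_mul]; field_simp; try ring

lemma exists_ns_round
    (A : K0 × K1 → S0 × S1 → ℝ) (A0 : K0 → S0 → ℝ) (A1 : K1 → S1 → ℝ)
    (hA : Stochastic A) (hA0 : Stochastic A0) (hA1 : Stochastic A1) :
    ∃ A' : K0 × K1 → S0 × S1 → ℝ, Stochastic A' ∧
      (∀ k0 i0 i1, ∑ k1, A' (k0, k1) (i0, i1) = A0 k0 i0) ∧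
      (∀ k1 i0 i1, ∑ k0, A' (k0, k1) (i0, i1) = A1 k1 i1) ∧
      ∀ i : S0 × S1, ∑ k : K0 × K1, max (A' k i - A k i) 0 ≤
        (∑ k0, max ((∑ k1, A (k0, k1) i) - A0 k0 i.1) 0) +
        (∑ k1, max ((∑ k0, A (k0, k1) i) - A1 k1 i.2) 0) := by
  classical
  have h : ∀ i : S0 × S1, ∃ b : K0 × K1 → ℝ, (∀ k, 0 ≤ b k) ∧
      (∀ k0, ∑ k1, b (k0, k1) = A0 k0 i.1) ∧
      (∀ k1, ∑ k0, b (k0, k1) = A1 k1 i.2) ∧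
      ∑ k, max (b k - A k i) 0 ≤
        (∑ k0, max ((∑ k1, A (k0, k1) i) - A0 k0 i.1) 0) +
        (∑ k1, max ((∑ k0, A (k0, k1) i) - A1 k1 i.2) 0) := by
    intro i
    exact couple (fun k => A k i) (fun k0 => A0 k0 i.1) (fun k1 => A1 k1 i.2)
      (fun k => hA.1 k i) (fun k0 => hA0.1 k0 i.1) (fun k1 => hA1.1 k1 i.2)
      (by rw [hA0.2 i.1, hA.2 i]) (by rw [hA1.2 i.2, hA.2 i])
  choose A' h0 h1 h2 h3 using h
  refine ⟨fun k i => A' i k, ⟨fun k i => h0 i k, fun i => ?_⟩,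
    fun k0 i0 i1 => h1 (i0, i1) k0, fun k1 i0 i1 => h2 (i0, i1) k1, h3⟩
  rw [Fintype.sum_prod_type]
  calc ∑ k0, ∑ k1, A' i (k0, k1) = ∑ k0, A0 k0 i.1 :=
        Finset.sum_congr rfl fun k0 _ => h1 i k0
    _ = 1 := hA0.2 i.1


lemma exists_stoch {K Q : Type*} [Fintype K] [Nonempty K] :
    ∃ M : K → Q → ℝ, Stochastic M := by
  have h0 : (0:ℝ) < (Fintype.card K : ℝ) := by exact_mod_cast Fintype.card_pos
  refine ⟨fun _ _ => (Fintype.card K : ℝ)⁻¹, fun _ _ => by positivity, fun q => ?_⟩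
  rw [Finset.sum_const, Finset.card_univ, nsmul_eq_mul]
  field_simp

lemma pen_bound {K' Q : Type*} [Fintype K'] [Fintype Q]
    (m c P : K' → Q → ℝ)
    (hm : ∀ k i, 0 ≤ m k i) (hmsum : ∀ i, ∑ k, m k i ≤ 1)
    (hc : ∀ k i, 0 ≤ c k i)
    (hP0 : ∀ k i, 0 ≤ P k i) (hP1 : ∀ k i, P k i ≤ 1) :
    ∑ k, ∑ i, (m k i - c k i) * P k i ≤ Fintype.card Q := by
  calc ∑ k, ∑ i, (m k i - c k i) * P k i
      ≤ ∑ k, ∑ i, m k i := by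
        refine Finset.sum_le_sum fun k _ => Finset.sum_le_sum fun i _ => ?_
        nlinarith [mul_nonneg (hc k i) (hP0 k i),
          mul_nonneg (hm k i) (sub_nonneg.2 (hP1 k i))]
    _ = ∑ i, ∑ k, m k i := Finset.sum_comm
    _ ≤ ∑ _i : Q, (1:ℝ) := Finset.sum_le_sum fun i _ => hmsum i
    _ = Fintype.card Q := by simp [Finset.card_univ]

lemma lam_le_mu
    [Nonempty S0] [Nonempty S1] [Nonempty K0] [Nonempty K1]
    [Nonempty T0] [Nonempty T1] [Nonempty L0] [Nonempty L1]
    (π : (S0 × S1) × (T0 × T1) → ℝ) (hπ : ∀ q, 0 ≤ π q) (hπ1 : ∑ q, π q = 1)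
    (v : (S0 × S1) × (T0 × T1) → (K0 × K1) × (L0 × L1) → ℝ)
    (hv : ∀ q r, 0 ≤ v q r ∧ v q r ≤ 1) :
    lamVal π v ≤ muVal π v := by
  classical
  have hp1 : ∀ i : S0 × S1, (0:ℝ) ≤ ∑ j, π (i, j) :=
    fun i => Finset.sum_nonneg fun j _ => hπ (i, j)
  have hple : ∀ i : S0 × S1, (∑ j, π (i, j)) ≤ 1 := by
    intro i
    rw [← hπ1, Fintype.sum_prod_type π]
    exact Finset.single_le_sum (f := fun i => ∑ j, π (i, j)) (fun i _ => hp1 i)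
      (Finset.mem_univ i)
  obtain ⟨Bu, hBu⟩ := exists_stoch_ns (T0 := T0) (T1 := T1) (L0 := L0) (L1 := L1)
  haveI hne : Nonempty {B : L0 × L1 → T0 × T1 → ℝ // Stochastic B ∧ NoSig B} := ⟨⟨Bu, hBu⟩⟩
  rw [muVal]
  haveI hneX : Nonempty
      {X : (K0 × K1 → S0 × S1 → ℝ) × (K0 → S0 → ℝ) × (K1 → S1 → ℝ) //
        Stochastic X.1 ∧ Stochastic X.2.1 ∧ Stochastic X.2.2} := by
    obtain ⟨Au, hAu⟩ := exists_stoch (K := K0 × K1) (Q := S0 × S1)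
    obtain ⟨A0u, hA0u⟩ := exists_stoch (K := K0) (Q := S0)
    obtain ⟨A1u, hA1u⟩ := exists_stoch (K := K1) (Q := S1)
    exact ⟨⟨(Au, A0u, A1u), hAu, hA0u, hA1u⟩⟩
  refine le_ciInf fun X => ?_
  obtain ⟨⟨A, A0, A1⟩, hA, hA0, hA1⟩ := X
  dsimp only
  obtain ⟨A', hA's, hw0, hw1, hbound⟩ := exists_ns_round A A0 A1 hA hA0 hA1
  have hA'ns : NoSig A' := ⟨⟨A0, hA0, hw0⟩, ⟨A1, hA1, hw1⟩⟩
  have hbddB : ∀ (C : K0 × K1 → S0 × S1 → ℝ), Stochastic C →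
      BddAbove (Set.range fun B : {B : L0 × L1 → T0 × T1 → ℝ // Stochastic B ∧ NoSig B} =>
        payoff π v C B.1) := by
    intro C hC
    refine ⟨1, ?_⟩
    rintro y ⟨B', rfl⟩
    exact payoff_le_one _ _ _ _ hπ hπ1 hv hC B'.2.1
  have step1 : lamVal π v ≤
      ⨆ B : {B : L0 × L1 → T0 × T1 → ℝ // Stochastic B ∧ NoSig B}, payoff π v A' B.1 := by
    rw [lamVal]
    refine ciInf_le ⟨0, ?_⟩ (⟨A', hA's, hA'ns⟩ :
      {A : K0 × K1 → S0 × S1 → ℝ // Stochastic A ∧ NoSig A})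
    rintro x ⟨A'', rfl⟩
    exact le_ciSup_of_le (hbddB A''.1 A''.2.1) ⟨Bu, hBu⟩
      (payoff_nonneg _ _ _ _ hπ hv A''.2.1.1 hBu.1.1)
  refine step1.trans (ciSup_le fun B' => ?_)
  -- the penalty matrices
  set Q0 : K0 → S0 × S1 → ℝ :=
    fun k0 i => if A0 k0 i.1 ≤ ∑ k1, A (k0, k1) i then ∑ j, π (i, j) else 0 with hQ0
  set Q1 : K1 → S0 × S1 → ℝ :=
    fun k1 i => if A1 k1 i.2 ≤ ∑ k0, A (k0, k1) i then ∑ j, π (i, j) else 0 with hQ1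
  have hQ0b : ∀ k0 i, 0 ≤ Q0 k0 i ∧ Q0 k0 i ≤ ∑ j, π (i, j) := by
    intro k0 i; simp only [hQ0]; split
    · exact ⟨hp1 i, le_refl _⟩
    · exact ⟨le_refl 0 |>.trans (le_refl 0), hp1 i⟩
  have hQ1b : ∀ k1 i, 0 ≤ Q1 k1 i ∧ Q1 k1 i ≤ ∑ j, π (i, j) := by
    intro k1 i; simp only [hQ1]; split
    · exact ⟨hp1 i, le_refl _⟩
    · exact ⟨le_refl 0 |>.trans (le_refl 0), hp1 i⟩
  have hbddY : BddAbove (Set.range fun Y :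
      {Y : (L0 × L1 → T0 × T1 → ℝ) × (K0 → S0 × S1 → ℝ) × (K1 → S0 × S1 → ℝ) //
          (Stochastic Y.1 ∧ NoSig Y.1) ∧
          (∀ k0 i, 0 ≤ Y.2.1 k0 i ∧ Y.2.1 k0 i ≤ ∑ j, π (i, j)) ∧
          (∀ k1 i, 0 ≤ Y.2.2 k1 i ∧ Y.2.2 k1 i ≤ ∑ j, π (i, j))} =>
      payoff π v A Y.1.1 +
        (∑ k0, ∑ i, ((∑ k1, A (k0, k1) i) - A0 k0 i.1) * Y.1.2.1 k0 i) +
        (∑ k1, ∑ i, ((∑ k0, A (k0, k1) i) - A1 k1 i.2) * Y.1.2.2 k1 i)) := by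
    refine ⟨1 + Fintype.card (S0 × S1) + Fintype.card (S0 × S1), ?_⟩
    rintro y ⟨⟨⟨BY, P0, P1⟩, hBY, hP0, hP1⟩, rfl⟩
    dsimp only
    have b1 : payoff π v A BY ≤ 1 := payoff_le_one _ _ _ _ hπ hπ1 hv hA hBY.1
    have b2 : ∑ k0, ∑ i, ((∑ k1, A (k0, k1) i) - A0 k0 i.1) * P0 k0 i
        ≤ Fintype.card (S0 × S1) := by
      refine pen_bound _ _ _ (fun k0 i => Finset.sum_nonneg fun k1 _ => hA.1 _ i) ?_
        (fun k0 i => hA0.1 k0 i.1) (fun k0 i => (hP0 k0 i).1)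
        (fun k0 i => (hP0 k0 i).2.trans (hple i))
      intro i
      have he : ∑ k0, ∑ k1, A (k0, k1) i = ∑ k : K0 × K1, A k i :=
        (Fintype.sum_prod_type (fun k : K0 × K1 => A k i)).symm
      rw [he, hA.2 i]
    have b3 : ∑ k1, ∑ i, ((∑ k0, A (k0, k1) i) - A1 k1 i.2) * P1 k1 i
        ≤ Fintype.card (S0 × S1) := by
      refine pen_bound _ _ _ (fun k1 i => Finset.sum_nonneg fun k0 _ => hA.1 _ i) ?_
        (fun k1 i => hA1.1 k1 i.2) (fun k1 i => (hP1 k1 i).1)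
        (fun k1 i => (hP1 k1 i).2.trans (hple i))
      intro i
      have he : ∑ k1, ∑ k0, A (k0, k1) i = ∑ k : K0 × K1, A k i := by
        rw [Fintype.sum_prod_type (fun k : K0 × K1 => A k i), Finset.sum_comm]
      rw [he, hA.2 i]
    linarith
  refine le_trans ?_ (le_ciSup hbddY ⟨(B'.1, Q0, Q1), ⟨B'.2, hQ0b, hQ1b⟩⟩)
  dsimp only
  -- main estimate
  have hpen0 : ∑ k0, ∑ i, ((∑ k1, A (k0, k1) i) - A0 k0 i.1) * Q0 k0 i
      = ∑ i, (∑ j, π (i, j)) * ∑ k0, max ((∑ k1, A (k0, k1) i) - A0 k0 i.1) 0 := by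
    rw [Finset.sum_comm]
    refine Finset.sum_congr rfl fun i _ => ?_
    rw [Finset.mul_sum]
    refine Finset.sum_congr rfl fun k0 _ => ?_
    by_cases h : A0 k0 i.1 ≤ ∑ k1, A (k0, k1) i
    · simp only [hQ0, if_pos h]
      rw [max_eq_left (by linarith)]; ring
    · simp only [hQ0, if_neg h]
      rw [max_eq_right (by push_neg at h; linarith)]; ring
  have hpen1 : ∑ k1, ∑ i, ((∑ k0, A (k0, k1) i) - A1 k1 i.2) * Q1 k1 i
      = ∑ i, (∑ j, π (i, j)) * ∑ k1, max ((∑ k0, A (k0, k1) i) - A1 k1 i.2) 0 := by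
    rw [Finset.sum_comm]
    refine Finset.sum_congr rfl fun i _ => ?_
    rw [Finset.mul_sum]
    refine Finset.sum_congr rfl fun k1 _ => ?_
    by_cases h : A1 k1 i.2 ≤ ∑ k0, A (k0, k1) i
    · simp only [hQ1, if_pos h]
      rw [max_eq_left (by linarith)]; ring
    · simp only [hQ1, if_neg h]
      rw [max_eq_right (by push_neg at h; linarith)]; ring
  have hdiff : payoff π v A' B'.1 - payoff π v A B'.1 ≤
      ∑ i, (∑ j, π (i, j)) *
        ((∑ k0, max ((∑ k1, A (k0, k1) i) - A0 k0 i.1) 0) +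
         (∑ k1, max ((∑ k0, A (k0, k1) i) - A1 k1 i.2) 0)) := by
    rw [payoff_eq, payoff_eq, ← Finset.sum_sub_distrib]
    have e1 : ∀ i : S0 × S1,
        (∑ k, A' k i * ∑ j, ∑ l, π (i, j) * v (i, j) (k, l) * B'.1 l j)
          - (∑ k, A k i * ∑ j, ∑ l, π (i, j) * v (i, j) (k, l) * B'.1 l j)
        = ∑ k, (A' k i - A k i) * ∑ j, ∑ l, π (i, j) * v (i, j) (k, l) * B'.1 l j := by
      intro i
      rw [← Finset.sum_sub_distrib]
      exact Finset.sum_congr rfl fun k _ => by ring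
    calc ∑ i, ((∑ k, A' k i * ∑ j, ∑ l, π (i, j) * v (i, j) (k, l) * B'.1 l j)
          - ∑ k, A k i * ∑ j, ∑ l, π (i, j) * v (i, j) (k, l) * B'.1 l j)
        = ∑ i, ∑ k, (A' k i - A k i) * ∑ j, ∑ l, π (i, j) * v (i, j) (k, l) * B'.1 l j :=
          Finset.sum_congr rfl fun i _ => e1 i
      _ ≤ ∑ i, ∑ k, max (A' k i - A k i) 0 * ∑ j, π (i, j) := by
          refine Finset.sum_le_sum fun i _ => Finset.sum_le_sum fun k _ => ?_
          calc (A' k i - A k i) * ∑ j, ∑ l, π (i, j) * v (i, j) (k, l) * B'.1 l j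
              ≤ max (A' k i - A k i) 0 * ∑ j, ∑ l, π (i, j) * v (i, j) (k, l) * B'.1 l j :=
                mul_le_mul_of_nonneg_right (le_max_left _ _)
                  (weight_nonneg π v B'.1 hπ hv B'.2.1.1 i k)
            _ ≤ max (A' k i - A k i) 0 * ∑ j, π (i, j) :=
                mul_le_mul_of_nonneg_left (weight_le π v B'.1 hπ hv B'.2.1 i k)
                  (le_max_right _ _)
      _ = ∑ i, (∑ k, max (A' k i - A k i) 0) * ∑ j, π (i, j) :=
          Finset.sum_congr rfl fun i _ => (Finset.sum_mul _ _ _).symm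
      _ ≤ ∑ i, ((∑ k0, max ((∑ k1, A (k0, k1) i) - A0 k0 i.1) 0) +
            (∑ k1, max ((∑ k0, A (k0, k1) i) - A1 k1 i.2) 0)) * ∑ j, π (i, j) :=
          Finset.sum_le_sum fun i _ => mul_le_mul_of_nonneg_right (hbound i) (hp1 i)
      _ = _ := Finset.sum_congr rfl fun i _ => mul_comm _ _
  rw [hpen0, hpen1]
  have hsplit : ∑ i, (∑ j, π (i, j)) *
        ((∑ k0, max ((∑ k1, A (k0, k1) i) - A0 k0 i.1) 0) +
         (∑ k1, max ((∑ k0, A (k0, k1) i) - A1 k1 i.2) 0))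
      = (∑ i, (∑ j, π (i, j)) * ∑ k0, max ((∑ k1, A (k0, k1) i) - A0 k0 i.1) 0)
        + ∑ i, (∑ j, π (i, j)) * ∑ k1, max ((∑ k0, A (k0, k1) i) - A1 k1 i.2) 0 := by
    rw [← Finset.sum_add_distrib]
    exact Finset.sum_congr rfl fun i _ => by ring
  linarith [hdiff, hsplit.ge, hsplit.le]

/-- If `(B, Pen0, Pen1)` is a δ-optimal maximizer for the relaxed problem `μ(V)`, then `B`
is a δ-optimal maximizer for the no-signaling equilibrium problem `λ(V)`. -/
theorem delta_optimal_Bob_transfers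
    [Nonempty S0] [Nonempty S1] [Nonempty K0] [Nonempty K1]
    [Nonempty T0] [Nonempty T1] [Nonempty L0] [Nonempty L1]
    (π : (S0 × S1) × (T0 × T1) → ℝ) (hπ : ∀ q, 0 ≤ π q) (hπ1 : ∑ q, π q = 1)
    (v : (S0 × S1) × (T0 × T1) → (K0 × K1) × (L0 × L1) → ℝ)
    (hv : ∀ q r, 0 ≤ v q r ∧ v q r ≤ 1)
    (δ : ℝ) (hδ : 0 ≤ δ)
    (B : L0 × L1 → T0 × T1 → ℝ) (hB : Stochastic B ∧ NoSig B)
    (Pen0 : K0 → S0 × S1 → ℝ) (hPen0 : ∀ k0 i, 0 ≤ Pen0 k0 i ∧ Pen0 k0 i ≤ ∑ j, π (i, j))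
    (Pen1 : K1 → S0 × S1 → ℝ) (hPen1 : ∀ k1 i, 0 ≤ Pen1 k1 i ∧ Pen1 k1 i ≤ ∑ j, π (i, j))
    (hopt : ∀ (A : K0 × K1 → S0 × S1 → ℝ) (A0 : K0 → S0 → ℝ) (A1 : K1 → S1 → ℝ),
      Stochastic A → Stochastic A0 → Stochastic A1 →
        muVal π v - δ ≤
          payoff π v A B +
            (∑ k0, ∑ i, ((∑ k1, A (k0, k1) i) - A0 k0 i.1) * Pen0 k0 i) +
            (∑ k1, ∑ i, ((∑ k0, A (k0, k1) i) - A1 k1 i.2) * Pen1 k1 i)) :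
    ∀ A : K0 × K1 → S0 × S1 → ℝ, Stochastic A → NoSig A →
      lamVal π v - δ ≤ payoff π v A B := by
  intro A hAs hAns
  obtain ⟨⟨A0, hA0, hw0⟩, ⟨A1, hA1, hw1⟩⟩ := hAns
  have h := hopt A A0 A1 hAs hA0 hA1
  have hz0 : ∑ k0, ∑ i, ((∑ k1, A (k0, k1) i) - A0 k0 i.1) * Pen0 k0 i = 0 := by
    refine Finset.sum_eq_zero fun k0 _ => Finset.sum_eq_zero fun i _ => ?_
    have hw := hw0 k0 i.1 i.2
    rw [Prod.mk.eta] at hw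
    rw [hw, sub_self, zero_mul]
  have hz1 : ∑ k1, ∑ i, ((∑ k0, A (k0, k1) i) - A1 k1 i.2) * Pen1 k1 i = 0 := by
    refine Finset.sum_eq_zero fun k1 _ => Finset.sum_eq_zero fun i _ => ?_
    have hw := hw1 k1 i.1 i.2
    rw [Prod.mk.eta] at hw
    rw [hw, sub_self, zero_mul]
  have hlm := lam_le_mu π hπ hπ1 v hv
  rw [hz0, hz1] at h
  linarith
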